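/- Let X be a complex Banach space and Δ : S(c₀(Γ)) → S(X) a surjective isometry. If for some n ∈ Γ one has Δ(λe_n) = λΔ(e_n) for some λ ∈ 𝕋 \ {±1}, then Δ(μe_n) = μΔ(e_n) for all μ ∈ 𝕋. Similarly, if Δ(λe_n) = λ̄Δ(e_n) for some λ ∈ 𝕋 \ {±1}, then Δ(μe_n) = μ̄Δ(e_n) for all μ ∈ 𝕋. -/

import Mathlib

open ZeroAtInfty Metric

/-- The canonical basis vector `e n` of `c₀(Γ)`. -/
noncomputable def stdBasis {Γ : Type*} [TopologicalSpace Γ] [DiscreteTopology Γ] [DecidableEq Γ]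
    (n : Γ) : C₀(Γ, ℂ) where
  toFun := fun k => if k = n then 1 else 0
  continuous_toFun := continuous_of_discreteTopology
  zero_at_infty' := by
    have h : (fun k => if k = n then (1 : ℂ) else 0) =ᶠ[Filter.cocompact Γ] 0 := by
      refine Filter.mem_cocompact.2 ⟨{n}, isCompact_singleton, ?_⟩
      intro k hk
      simp only [Set.mem_compl_iff, Set.mem_singleton_iff] at hk
      simp [hk]
    exact Filter.Tendsto.congr' h.symm tendsto_const_nhds

/-!
For `ν ∈ 𝕋` the map `Δ⁻¹ ∘ (ν •) ∘ Δ` is a surjective isometry of the unit sphere of `c₀(Γ)`, so it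
preserves the sets `A(A(p))` of points antipodal to every point antipodal to `p`. Around `eₙ` this
set lies in the closed ball of radius `1`, whereas around a point with a coordinate of modulus
strictly between `0` and `1` it does not; hence every coordinate of `Δ⁻¹(ν Δ(eₙ))` is `0` or
unimodular. Two such points at distance `< 1`, one of them a multiple of `eₙ`, are both multiples
of `eₙ`, and `ν ↦ Δ⁻¹(ν Δ(eₙ))` is an isometry on the connected circle, so
`Δ⁻¹(ν Δ(eₙ)) = c eₙ` for every `ν`. The scalar `c` is then pinned down by its distances to `0`,
`1` and the non-real `λ`, the last of which the hypothesis on `λ` makes known.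
-/


section DoubleAntipodes

variable {α β : Type*} [PseudoMetricSpace α] [PseudoMetricSpace β]

/-- For `r = 2` in a unit sphere this is the set `A(A(p))`, where `A(q)` consists of the points
antipodal to `q`. -/
def doubleAntipodes (r : ℝ) (p : α) : Set α :=
  {f | ∀ h, dist h p = r → dist f h = r}

lemma IsometryEquiv.apply_mem_doubleAntipodes_iff (Φ : α ≃ᵢ β) {r : ℝ} {p f : α} :
    Φ f ∈ doubleAntipodes r (Φ p) ↔ f ∈ doubleAntipodes r p := by
  refine ⟨fun hf h hh => ?_, fun hf h hh => ?_⟩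
  · simpa only [Φ.dist_eq] using hf (Φ h) (by rwa [Φ.dist_eq])
  · rw [← Φ.apply_symm_apply h, Φ.dist_eq]
    exact hf (Φ.symm h) (by rwa [← Φ.dist_eq, Φ.apply_symm_apply])

end DoubleAntipodes

lemma PreconnectedSpace.forall_of_dist_lt {α : Type*} [PseudoMetricSpace α] [PreconnectedSpace α]
    {Q : α → Prop} {ε : ℝ} (hε : 0 < ε) (hQ : ∀ x y, dist x y < ε → Q x → Q y) {a : α}
    (ha : Q a) (x : α) : Q x := by
  refine (PreconnectedSpace.induction₂' (fun x y => Q x ↔ Q y) (fun x => ?_)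
    ⟨fun _ _ _ => Iff.trans⟩ a x).1 ha
  filter_upwards [ball_mem_nhds x hε] with y hy
  have hy' : dist x y < ε := by rwa [dist_comm]
  exact ⟨⟨hQ x y hy', hQ y x hy⟩, ⟨hQ y x hy, hQ x y hy'⟩⟩

lemma dist_smul_sphere_right {𝕜 E : Type*} [NormedField 𝕜] [SeminormedAddCommGroup E]
    [NormedSpace 𝕜 E] (a b : sphere (0 : 𝕜) 1) (v : sphere (0 : E) 1) :
    dist (a • v) (b • v) = dist a b := by
  rw [Subtype.dist_eq, Subtype.dist_eq, dist_eq_norm, dist_eq_norm]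
  show ‖(a : 𝕜) • (v : E) - (b : 𝕜) • (v : E)‖ = _
  rw [← sub_smul, norm_smul, mem_sphere_zero_iff_norm.1 v.2, mul_one]

instance isIsometricSMul_sphere_sphere {𝕜 E : Type*} [NormedField 𝕜] [SeminormedAddCommGroup E]
    [NormedSpace 𝕜 E] {r : ℝ} : IsIsometricSMul (sphere (0 : 𝕜) 1) (sphere (0 : E) r) :=
  ⟨fun c => Isometry.of_dist_eq fun x y => by
    simp only [Subtype.dist_eq]
    rw [show ((c • x : sphere (0 : E) r) : E) = (c : 𝕜) • (x : E) from rfl,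
      show ((c • y : sphere (0 : E) r) : E) = (c : 𝕜) • (y : E) from rfl, dist_smul₀,
      mem_sphere_zero_iff_norm.1 c.2, one_mul]⟩

namespace Complex

lemma im_ne_zero_of_norm_eq_one {z : ℂ} (hz : ‖z‖ = 1) (h1 : z ≠ 1) (h2 : z ≠ -1) : z.im ≠ 0 := by
  intro him
  have hre : z = z.re := ext rfl (by simp [him])
  rw [hre, norm_real, Real.norm_eq_abs] at hz
  rcases abs_eq zero_le_one |>.1 hz with h | h
  · exact h1 (by rw [hre, h]; simp)
  · exact h2 (by rw [hre, h]; simp)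

lemma eq_of_dist_eq {z w a : ℂ} (ha : a.im ≠ 0) (h0 : ‖z‖ = ‖w‖) (h1 : dist z 1 = dist w 1)
    (ha' : dist z a = dist w a) : z = w := by
  rw [dist_eq, dist_eq] at h1 ha'
  replace h0 := congrArg (· ^ 2) h0
  replace h1 := congrArg (· ^ 2) h1
  replace ha' := congrArg (· ^ 2) ha'
  simp only [Complex.sq_norm, normSq_apply, sub_re, sub_im, one_re, one_im] at h0 h1 ha'
  have hre : z.re = w.re := by linarith
  refine ext hre (mul_right_cancel₀ ha ?_)
  rw [hre] at h0 ha'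
  linarith

lemma eq_one_of_norm_le_one_of_two_le_norm_add_one {z : ℂ} (h1 : ‖z‖ ≤ 1) (h2 : 2 ≤ ‖z + 1‖) :
    z = 1 := by
  have hz : normSq z ≤ 1 := by rw [← Complex.sq_norm]; nlinarith [norm_nonneg z]
  have hz1 : 4 ≤ normSq (z + 1) := by rw [← Complex.sq_norm]; nlinarith
  simp only [normSq_apply, add_re, add_im, one_re, one_im] at hz hz1
  refine ext ?_ ?_ <;> simp only [one_re, one_im] <;>
    nlinarith [sq_nonneg z.im, sq_nonneg (z.re - 1)]

end Complex

namespace ZeroAtInftyContinuousMap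

variable {α E : Type*} [TopologicalSpace α] [SeminormedAddCommGroup E]

lemma norm_apply_le (f : C₀(α, E)) (x : α) : ‖f x‖ ≤ ‖f‖ :=
  f.toBCF.norm_coe_le_norm x

lemma norm_le_iff {f : C₀(α, E)} {C : ℝ} (hC : 0 ≤ C) : ‖f‖ ≤ C ↔ ∀ x, ‖f x‖ ≤ C :=
  BoundedContinuousFunction.norm_le hC

lemma norm_le_max_of_forall_ne (f : C₀(α, E)) (x₀ : α) {C : ℝ} (hC : 0 ≤ C)
    (h : ∀ x ≠ x₀, ‖f x‖ ≤ C) : ‖f‖ ≤ max ‖f x₀‖ C := by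
  refine (norm_le_iff (hC.trans (le_max_right _ _))).2 fun x => ?_
  by_cases hx : x = x₀
  · exact hx ▸ le_max_left _ _
  · exact (h x hx).trans (le_max_right _ _)

end ZeroAtInftyContinuousMap

open ZeroAtInftyContinuousMap

section StdBasis

variable {Γ : Type*} [TopologicalSpace Γ] [DiscreteTopology Γ] [DecidableEq Γ]

lemma stdBasis_apply (n k : Γ) : stdBasis n k = if k = n then 1 else 0 := rfl

lemma norm_smul_stdBasis (c : ℂ) (n : Γ) : ‖c • stdBasis n‖ = ‖c‖ := by
  refine le_antisymm ((norm_le_iff (norm_nonneg c)).2 fun k => ?_) ?_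
  · by_cases hk : k = n <;> simp [stdBasis_apply, hk]
  · simpa [stdBasis_apply] using norm_apply_le (c • stdBasis n) n

lemma dist_smul_stdBasis (a b : ℂ) (n : Γ) : dist (a • stdBasis n) (b • stdBasis n) = dist a b := by
  rw [dist_eq_norm, dist_eq_norm, ← norm_smul_stdBasis (a - b) n]
  exact congrArg norm (sub_smul a b (stdBasis n)).symm

lemma dist_le_one_of_mem_doubleAntipodes {n : Γ} {y f : sphere (0 : C₀(Γ, ℂ)) 1}
    (hy : (y : C₀(Γ, ℂ)) = stdBasis n) (hf : f ∈ doubleAntipodes 2 y) : dist f y ≤ 1 := by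
  have hf1 : ∀ k, ‖(f : C₀(Γ, ℂ)) k‖ ≤ 1 := fun k =>
    (norm_apply_le _ k).trans (mem_sphere_zero_iff_norm.1 f.2).le
  let m : sphere (0 : C₀(Γ, ℂ)) 1 :=
    ⟨-stdBasis n, by simpa using norm_smul_stdBasis 1 n⟩
  have hm : dist m y = 2 := by
    rw [Subtype.dist_eq, dist_eq_norm, hy, show -stdBasis n - stdBasis n = (-2 : ℂ) • stdBasis n
      by module, norm_smul_stdBasis]
    norm_num
  have hfm : ‖(f : C₀(Γ, ℂ)) + stdBasis n‖ = 2 := by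
    simpa [m, Subtype.dist_eq, dist_eq_norm] using hf m hm
  have hfn : (f : C₀(Γ, ℂ)) n = 1 := by
    refine Complex.eq_one_of_norm_le_one_of_two_le_norm_add_one (hf1 n) ?_
    have := norm_le_max_of_forall_ne ((f : C₀(Γ, ℂ)) + stdBasis n) n zero_le_one
      fun k hk => by simpa [stdBasis_apply, hk] using hf1 k
    simp only [coe_add, Pi.add_apply, stdBasis_apply, hfm] at this
    rcases le_max_iff.1 this with h | h
    · exact h
    · norm_num at h
  rw [Subtype.dist_eq, dist_eq_norm, hy, norm_le_iff zero_le_one]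
  intro k
  by_cases hk : k = n
  · simp [hk, hfn, stdBasis_apply]
  · simpa [stdBasis_apply, hk] using hf1 k

lemma exists_mem_doubleAntipodes_one_lt_dist (g : sphere (0 : C₀(Γ, ℂ)) 1) {k₀ : Γ}
    (h0 : (g : C₀(Γ, ℂ)) k₀ ≠ 0) (h1 : ‖(g : C₀(Γ, ℂ)) k₀‖ < 1) :
    ∃ f ∈ doubleAntipodes 2 g, 1 < dist f g := by
  set r := ‖(g : C₀(Γ, ℂ)) k₀‖
  have hr : 0 < r := norm_pos_iff.2 h0
  have hg1 : ∀ k, ‖(g : C₀(Γ, ℂ)) k‖ ≤ 1 := fun k =>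
    (norm_apply_le _ k).trans (mem_sphere_zero_iff_norm.1 g.2).le
  -- push the coordinate `g k₀` radially through `0` to the unit circle
  set d : ℂ := ((1 + r⁻¹ : ℝ) : ℂ) * (g : C₀(Γ, ℂ)) k₀
  have hd : ‖d‖ = 1 + r := by
    rw [norm_mul, Complex.norm_real, Real.norm_eq_abs, abs_of_pos (by positivity), add_mul,
      one_mul, inv_mul_cancel₀ hr.ne', add_comm]
  have hdk₀ : ‖(g : C₀(Γ, ℂ)) k₀ - d‖ = 1 := by
    rw [show (g : C₀(Γ, ℂ)) k₀ - d = -((r⁻¹ : ℝ) : ℂ) * (g : C₀(Γ, ℂ)) k₀ by push_cast [d]; ring,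
      norm_mul, norm_neg, Complex.norm_real, Real.norm_eq_abs, abs_of_pos (inv_pos.2 hr),
      inv_mul_cancel₀ hr.ne']
  set F : C₀(Γ, ℂ) := (g : C₀(Γ, ℂ)) - d • stdBasis k₀
  have hF_apply : ∀ k, F k = (g : C₀(Γ, ℂ)) k - if k = k₀ then d else 0 := by
    intro k
    by_cases hk : k = k₀ <;> simp [F, stdBasis_apply, hk]
  have hF_norm : ‖F‖ = 1 := by
    refine le_antisymm ((norm_le_iff zero_le_one).2 fun k => ?_) ?_
    · by_cases hk : k = k₀
      · simpa [hF_apply, hk] using hdk₀.le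
      · simpa [hF_apply, hk] using hg1 k
    · simpa [hF_apply, hdk₀] using norm_apply_le F k₀
  refine ⟨⟨F, mem_sphere_zero_iff_norm.2 hF_norm⟩, fun h hh => ?_, ?_⟩
  · have hh1 : ‖(h : C₀(Γ, ℂ))‖ = 1 := mem_sphere_zero_iff_norm.1 h.2
    rw [Subtype.dist_eq, dist_eq_norm] at hh ⊢
    refine le_antisymm ((norm_sub_le _ _).trans (by rw [hF_norm, hh1]; norm_num)) ?_
    have hmax := norm_le_max_of_forall_ne ((h : C₀(Γ, ℂ)) - (g : C₀(Γ, ℂ))) k₀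
      (norm_nonneg (F - h)) fun k hk => by
        have : ((h : C₀(Γ, ℂ)) - (g : C₀(Γ, ℂ))) k = -(F - h) k := by simp [hF_apply, hk]
        rw [this, norm_neg]
        exact norm_apply_le _ k
    have hk₀ : ‖((h : C₀(Γ, ℂ)) - (g : C₀(Γ, ℂ))) k₀‖ < 2 := calc
      ‖((h : C₀(Γ, ℂ)) - (g : C₀(Γ, ℂ))) k₀‖ ≤ ‖(h : C₀(Γ, ℂ)) k₀‖ + r := norm_sub_le _ _
      _ ≤ 1 + r := by grw [norm_apply_le, hh1]
      _ < 2 := by linarith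
    rw [hh] at hmax
    exact (le_max_iff.1 hmax).resolve_left hk₀.not_ge
  · rw [Subtype.dist_eq, dist_eq_norm, sub_sub_cancel_left, norm_neg, norm_smul_stdBasis, hd]
    linarith

lemma IsometryEquiv.apply_eq_zero_or_norm_eq_one
    (Φ : sphere (0 : C₀(Γ, ℂ)) 1 ≃ᵢ sphere (0 : C₀(Γ, ℂ)) 1) {n : Γ}
    {y : sphere (0 : C₀(Γ, ℂ)) 1} (hy : (y : C₀(Γ, ℂ)) = stdBasis n) (k : Γ) :
    (Φ y : C₀(Γ, ℂ)) k = 0 ∨ ‖(Φ y : C₀(Γ, ℂ)) k‖ = 1 := by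
  by_contra! h
  have hlt : ‖(Φ y : C₀(Γ, ℂ)) k‖ < 1 :=
    ((norm_apply_le _ k).trans (mem_sphere_zero_iff_norm.1 (Φ y).2).le).lt_of_ne h.2
  obtain ⟨f, hf, hfy⟩ := exists_mem_doubleAntipodes_one_lt_dist (Φ y) h.1 hlt
  rw [← Φ.apply_symm_apply f, Φ.apply_mem_doubleAntipodes_iff] at hf
  rw [← Φ.apply_symm_apply f, Φ.dist_eq] at hfy
  exact (dist_le_one_of_mem_doubleAntipodes hy hf).not_gt hfy

lemma exists_eq_smul_stdBasis_of_dist_lt_one {n : Γ} {g g' : sphere (0 : C₀(Γ, ℂ)) 1}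
    (hg' : ∀ k, (g' : C₀(Γ, ℂ)) k = 0 ∨ ‖(g' : C₀(Γ, ℂ)) k‖ = 1) (hd : dist g g' < 1)
    (hg : ∃ c : ℂ, (g : C₀(Γ, ℂ)) = c • stdBasis n) :
    ∃ c : ℂ, (g' : C₀(Γ, ℂ)) = c • stdBasis n := by
  obtain ⟨c, hc⟩ := hg
  have hcoord (k : Γ) : ‖(g' : C₀(Γ, ℂ)) k - (c • stdBasis n : C₀(Γ, ℂ)) k‖ < 1 := by
    rw [← hc, ← Pi.sub_apply, ← coe_sub]
    exact (norm_apply_le _ k).trans_lt (by rwa [← dist_eq_norm, ← Subtype.dist_eq, dist_comm])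
  refine ⟨(g' : C₀(Γ, ℂ)) n, ext fun k => ?_⟩
  by_cases hk : k = n
  · simp [hk, stdBasis_apply]
  · have hk' : ‖(g' : C₀(Γ, ℂ)) k‖ < 1 := by simpa [stdBasis_apply, hk] using hcoord k
    simpa [stdBasis_apply, hk] using (hg' k).resolve_right hk'.ne

end StdBasis

section SurjectiveIsometry

variable {Γ : Type*} [TopologicalSpace Γ] [DiscreteTopology Γ] [DecidableEq Γ]
  {X : Type*} [NormedAddCommGroup X] [NormedSpace ℂ X]
  (D : sphere (0 : C₀(Γ, ℂ)) 1 ≃ᵢ sphere (0 : X) 1) {n : Γ} {y : sphere (0 : C₀(Γ, ℂ)) 1}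

lemma IsometryEquiv.exists_symm_smul_eq_smul_stdBasis (hy : (y : C₀(Γ, ℂ)) = stdBasis n)
    (ν : sphere (0 : ℂ) 1) : ∃ c : ℂ, (D.symm (ν • D y) : C₀(Γ, ℂ)) = c • stdBasis n := by
  have : PreconnectedSpace (sphere (0 : ℂ) 1) := Subtype.preconnectedSpace
    (isPreconnected_sphere (by rw [Complex.rank_real_complex]; norm_num) 0 1)
  have hcoord (ν : sphere (0 : ℂ) 1) (k : Γ) :
      (D.symm (ν • D y) : C₀(Γ, ℂ)) k = 0 ∨ ‖(D.symm (ν • D y) : C₀(Γ, ℂ)) k‖ = 1 :=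
    ((D.trans (IsometryEquiv.constSMul ν)).trans D.symm).apply_eq_zero_or_norm_eq_one hy k
  refine PreconnectedSpace.forall_of_dist_lt one_pos (fun ν₁ ν₂ hν =>
    exists_eq_smul_stdBasis_of_dist_lt_one (hcoord ν₂) ?_) (a := 1) ⟨1, by simp [hy]⟩ ν
  rwa [D.symm.dist_eq, dist_smul_sphere_right]

lemma IsometryEquiv.apply_eq_smul_of_apply_eq_smul (hy : (y : C₀(Γ, ℂ)) = stdBasis n)
    {lam μ ν₀ : ℂ} (hlam : lam.im ≠ 0) {x₀ x : sphere (0 : C₀(Γ, ℂ)) 1}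
    (hx₀ : (x₀ : C₀(Γ, ℂ)) = lam • stdBasis n) (hx : (x : C₀(Γ, ℂ)) = μ • stdBasis n)
    (hDx₀ : (D x₀ : X) = ν₀ • (D y : X)) (ν : sphere (0 : ℂ) 1)
    (h1 : dist (ν : ℂ) 1 = dist μ 1) (h₀ : dist (ν : ℂ) ν₀ = dist μ lam) :
    (D x : X) = (ν : ℂ) • (D y : X) := by
  obtain ⟨c, hc⟩ := D.exists_symm_smul_eq_smul_stdBasis hy ν
  set z := D.symm (ν • D y)
  have hDz : (D z : X) = (ν : ℂ) • (D y : X) := by simp only [z, D.apply_symm_apply]; rfl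
  have hdist {w : sphere (0 : C₀(Γ, ℂ)) 1} {a : ℂ} (hw : (D w : X) = a • (D y : X)) :
      dist (z : C₀(Γ, ℂ)) w = dist (ν : ℂ) a := by
    rw [← Subtype.dist_eq, ← D.dist_eq, Subtype.dist_eq, hDz, hw, dist_eq_norm, ← sub_smul,
      norm_smul, mem_sphere_zero_iff_norm.1 (D y).2, mul_one, dist_eq_norm]
  have hcμ : c = μ := by
    refine Complex.eq_of_dist_eq hlam ?_ ?_ ?_
    · rw [← norm_smul_stdBasis c n, ← hc, ← norm_smul_stdBasis μ n, ← hx,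
        mem_sphere_zero_iff_norm.1 z.2, mem_sphere_zero_iff_norm.1 x.2]
    · rw [← h1, ← dist_smul_stdBasis c 1 n, ← hc, one_smul, ← hy,
        hdist (a := 1) (by rw [one_smul])]
    · rw [← h₀, ← dist_smul_stdBasis c lam n, ← hc, ← hx₀, hdist hDx₀]
  have hzx : z = x := Subtype.ext (by rw [hc, hx, hcμ])
  rw [← hzx, hDz]

end SurjectiveIsometry

theorem unimodular_behaviour_propagates_general {Γ : Type*} [TopologicalSpace Γ] [DiscreteTopology Γ]
    [DecidableEq Γ]
    {X : Type*} [NormedAddCommGroup X] [NormedSpace ℂ X]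
    (Δ : sphere (0 : C₀(Γ, ℂ)) 1 → sphere (0 : X) 1)
    (hΔiso : Isometry Δ) (hΔsurj : Function.Surjective Δ)
    (n : Γ) (lam : ℂ) (hlam : ‖lam‖ = 1) (hlam1 : lam ≠ 1) (hlam2 : lam ≠ -1) :
    ((∀ x y : sphere (0 : C₀(Γ, ℂ)) 1, (x : C₀(Γ, ℂ)) = lam • stdBasis n →
        (y : C₀(Γ, ℂ)) = stdBasis n → (Δ x : X) = lam • (Δ y : X)) →
      ∀ μ : ℂ, ‖μ‖ = 1 → ∀ x y : sphere (0 : C₀(Γ, ℂ)) 1,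
        (x : C₀(Γ, ℂ)) = μ • stdBasis n → (y : C₀(Γ, ℂ)) = stdBasis n →
          (Δ x : X) = μ • (Δ y : X)) ∧
    ((∀ x y : sphere (0 : C₀(Γ, ℂ)) 1, (x : C₀(Γ, ℂ)) = lam • stdBasis n →
        (y : C₀(Γ, ℂ)) = stdBasis n → (Δ x : X) = (starRingEnd ℂ) lam • (Δ y : X)) →
      ∀ μ : ℂ, ‖μ‖ = 1 → ∀ x y : sphere (0 : C₀(Γ, ℂ)) 1,
        (x : C₀(Γ, ℂ)) = μ • stdBasis n → (y : C₀(Γ, ℂ)) = stdBasis n →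
          (Δ x : X) = (starRingEnd ℂ) μ • (Δ y : X)) := by
  let D := IsometryEquiv.mk' Δ (Function.surjInv hΔsurj) (Function.surjInv_eq hΔsurj) hΔiso
  have hlam_im : lam.im ≠ 0 := Complex.im_ne_zero_of_norm_eq_one hlam hlam1 hlam2
  let xlam : sphere (0 : C₀(Γ, ℂ)) 1 := ⟨lam • stdBasis n, by simp [norm_smul_stdBasis, hlam]⟩
  constructor
  · intro hyp μ hμ x y hx hy
    exact D.apply_eq_smul_of_apply_eq_smul hy hlam_im rfl hx (hyp xlam y rfl hy) ⟨μ, by simpa⟩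
      rfl rfl
  · intro hyp μ hμ x y hx hy
    exact D.apply_eq_smul_of_apply_eq_smul hy hlam_im rfl hx (hyp xlam y rfl hy)
      ⟨starRingEnd ℂ μ, by simpa⟩ (by simpa using Complex.dist_conj_conj μ 1)
      (Complex.dist_conj_conj μ lam)

/-- If `Δ(λ eₙ) = λ Δ(eₙ)` (resp. `Δ(λ eₙ) = conj λ • Δ(eₙ)`) for a single
`λ ∈ 𝕋 \ {±1}`, then the same behaviour holds for every unimodular `μ`. -/
theorem unimodular_behaviour_propagates {Γ : Type*} [TopologicalSpace Γ] [DiscreteTopology Γ]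
    [DecidableEq Γ] [Infinite Γ]
    {X : Type*} [NormedAddCommGroup X] [NormedSpace ℂ X] [CompleteSpace X]
    (Δ : sphere (0 : C₀(Γ, ℂ)) 1 → sphere (0 : X) 1)
    (hΔiso : Isometry Δ) (hΔsurj : Function.Surjective Δ)
    (n : Γ) (lam : ℂ) (hlam : ‖lam‖ = 1) (hlam1 : lam ≠ 1) (hlam2 : lam ≠ -1) :
    ((∀ x y : sphere (0 : C₀(Γ, ℂ)) 1, (x : C₀(Γ, ℂ)) = lam • stdBasis n →
        (y : C₀(Γ, ℂ)) = stdBasis n → (Δ x : X) = lam • (Δ y : X)) →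
      ∀ μ : ℂ, ‖μ‖ = 1 → ∀ x y : sphere (0 : C₀(Γ, ℂ)) 1,
        (x : C₀(Γ, ℂ)) = μ • stdBasis n → (y : C₀(Γ, ℂ)) = stdBasis n →
          (Δ x : X) = μ • (Δ y : X)) ∧
    ((∀ x y : sphere (0 : C₀(Γ, ℂ)) 1, (x : C₀(Γ, ℂ)) = lam • stdBasis n →
        (y : C₀(Γ, ℂ)) = stdBasis n → (Δ x : X) = (starRingEnd ℂ) lam • (Δ y : X)) →
      ∀ μ : ℂ, ‖μ‖ = 1 → ∀ x y : sphere (0 : C₀(Γ, ℂ)) 1,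
        (x : C₀(Γ, ℂ)) = μ • stdBasis n → (y : C₀(Γ, ℂ)) = stdBasis n →
          (Δ x : X) = (starRingEnd ℂ) μ • (Δ y : X)) :=
  unimodular_behaviour_propagates_general Δ hΔiso hΔsurj n lam hlam hlam1 hlam2
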